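/- arXiv:2006.08840 — 4 statements merged into one kernel-verified Lean document; each statement's English description precedes it below -/
import Mathlib

section
/- Let $T = (0,h) \times (0,p)$ with $h,p > 0$, and let $w \in H^1(T,\mathbb{R})$ be harmonic in $T$ satisfying $w(x,0) = w(x,p) = 0$ for all $x \in (0,h)$ in the sense of traces. Then $\|\partial_y w\|_{L^2(T)}^2 \leq \frac{2\sqrt{3}}{h}\|\partial_x w\|_{L^2(T)}\|w\|_{L^2(T)} + \|\partial_x w\|_{L^2(T)}^2$. -/
open MeasureTheory Set

noncomputable section

/-- Partial derivative in the first (x) variable. -/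
def pdx (f : ℝ × ℝ → ℝ) (p : ℝ × ℝ) : ℝ := deriv (fun s => f (s, p.2)) p.1

/-- Partial derivative in the second (y) variable. -/
def pdy (f : ℝ × ℝ → ℝ) (p : ℝ × ℝ) : ℝ := deriv (fun s => f (p.1, s)) p.2

/-- L² norm of a function over a set. -/
def L2 (T : Set (ℝ × ℝ)) (f : ℝ × ℝ → ℝ) : ℝ := Real.sqrt (∫ p in T, (f p) ^ 2)

section Aux

lemma hasDerivAt_fst {f : ℝ × ℝ → ℝ} (hf : Differentiable ℝ f) (x y : ℝ) :
    HasDerivAt (fun s => f (s, y)) (fderiv ℝ f (x, y) (1, 0)) x := by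
  have h1 : HasDerivAt (fun s : ℝ => (s, y)) ((1:ℝ), (0:ℝ)) x := by
    simpa using (hasDerivAt_id x).prodMk (hasDerivAt_const x y)
  exact (hf (x, y)).hasFDerivAt.comp_hasDerivAt x h1

lemma hasDerivAt_snd {f : ℝ × ℝ → ℝ} (hf : Differentiable ℝ f) (x y : ℝ) :
    HasDerivAt (fun t => f (x, t)) (fderiv ℝ f (x, y) (0, 1)) y := by
  have h1 : HasDerivAt (fun t : ℝ => (x, t)) ((0:ℝ), (1:ℝ)) y := by
    simpa using (hasDerivAt_const y x).prodMk (hasDerivAt_id y)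
  exact (hf (x, y)).hasFDerivAt.comp_hasDerivAt y h1

lemma pdx_eq {f : ℝ × ℝ → ℝ} (hf : Differentiable ℝ f) (q : ℝ × ℝ) :
    pdx f q = fderiv ℝ f q (1, 0) := by
  have := hasDerivAt_fst hf q.1 q.2
  simpa [pdx] using this.deriv

lemma pdy_eq {f : ℝ × ℝ → ℝ} (hf : Differentiable ℝ f) (q : ℝ × ℝ) :
    pdy f q = fderiv ℝ f q (0, 1) := by
  have := hasDerivAt_snd hf q.1 q.2
  simpa [pdy] using this.deriv

lemma contDiff_pdx {n : ℕ} {f : ℝ × ℝ → ℝ} (hf : ContDiff ℝ (n + 1) f) :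
    ContDiff ℝ n (pdx f) := by
  have h : pdx f = fun q => fderiv ℝ f q (1, 0) := by
    funext q; exact pdx_eq (hf.differentiable (by simp)) q
  rw [h]
  exact (hf.fderiv_right (le_refl _)).clm_apply contDiff_const

lemma contDiff_pdy {n : ℕ} {f : ℝ × ℝ → ℝ} (hf : ContDiff ℝ (n + 1) f) :
    ContDiff ℝ n (pdy f) := by
  have h : pdy f = fun q => fderiv ℝ f q (0, 1) := by
    funext q; exact pdy_eq (hf.differentiable (by simp)) q
  rw [h]
  exact (hf.fderiv_right (le_refl _)).clm_apply contDiff_const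

lemma differentiable_pdx {f : ℝ × ℝ → ℝ} (hf : ContDiff ℝ 2 f) : Differentiable ℝ (pdx f) := by
  have : ContDiff ℝ 1 (pdx f) := contDiff_pdx (n := 1) (by exact_mod_cast hf)
  exact this.differentiable one_ne_zero

lemma differentiable_pdy {f : ℝ × ℝ → ℝ} (hf : ContDiff ℝ 2 f) : Differentiable ℝ (pdy f) := by
  have : ContDiff ℝ 1 (pdy f) := contDiff_pdy (n := 1) (by exact_mod_cast hf)
  exact this.differentiable one_ne_zero

lemma hasDerivAt_pdx_slice {g : ℝ × ℝ → ℝ} (hg : Differentiable ℝ g) (x y : ℝ) :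
    HasDerivAt (fun s => g (s, y)) (pdx g (x, y)) x := by
  rw [pdx_eq hg (x, y)]
  exact hasDerivAt_fst hg x y

lemma hasDerivAt_pdy_slice {g : ℝ × ℝ → ℝ} (hg : Differentiable ℝ g) (x y : ℝ) :
    HasDerivAt (fun t => g (x, t)) (pdy g (x, y)) y := by
  rw [pdy_eq hg (x, y)]
  exact hasDerivAt_snd hg x y

lemma clairaut {f : ℝ × ℝ → ℝ} (hf : ContDiff ℝ 2 f) (q : ℝ × ℝ) :
    pdx (pdy f) q = pdy (pdx f) q := by
  have hd1 : Differentiable ℝ f := hf.differentiable two_ne_zero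
  have hfd : ContDiff ℝ 1 (fderiv ℝ f) := hf.fderiv_right (le_refl _)
  have hdd : DifferentiableAt ℝ (fderiv ℝ f) q := (hfd.differentiable one_ne_zero) q
  have hpdy : pdy f = fun q => fderiv ℝ f q ((0:ℝ),(1:ℝ)) := funext (pdy_eq hd1)
  have hpdx : pdx f = fun q => fderiv ℝ f q ((1:ℝ),(0:ℝ)) := funext (pdx_eq hd1)
  have hpdyd : Differentiable ℝ (pdy f) := differentiable_pdy hf
  have hpdxd : Differentiable ℝ (pdx f) := differentiable_pdx hf
  rw [pdx_eq hpdyd q, pdy_eq hpdxd q]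
  have h1 : HasFDerivAt (pdy f)
      (((ContinuousLinearMap.apply ℝ ℝ) ((0:ℝ),(1:ℝ))).comp (fderiv ℝ (fderiv ℝ f) q)) q := by
    rw [hpdy]
    exact ((ContinuousLinearMap.apply ℝ ℝ) ((0:ℝ),(1:ℝ))).hasFDerivAt.comp q hdd.hasFDerivAt
  have h2 : HasFDerivAt (pdx f)
      (((ContinuousLinearMap.apply ℝ ℝ) ((1:ℝ),(0:ℝ))).comp (fderiv ℝ (fderiv ℝ f) q)) q := by
    rw [hpdx]
    exact ((ContinuousLinearMap.apply ℝ ℝ) ((1:ℝ),(0:ℝ))).hasFDerivAt.comp q hdd.hasFDerivAt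
  rw [h1.fderiv, h2.fderiv]
  exact second_derivative_symmetric (fun y => (hd1 y).hasFDerivAt) hdd.hasFDerivAt _ _

lemma continuous_pdx_of_contDiff_one {f : ℝ × ℝ → ℝ} (hf : ContDiff ℝ 1 f) :
    Continuous (pdx f) := by
  have : ContDiff ℝ 0 (pdx f) := contDiff_pdx (n := 0) (by exact_mod_cast hf)
  exact this.continuous

lemma continuous_pdy_of_contDiff_one {f : ℝ × ℝ → ℝ} (hf : ContDiff ℝ 1 f) :
    Continuous (pdy f) := by
  have : ContDiff ℝ 0 (pdy f) := contDiff_pdy (n := 0) (by exact_mod_cast hf)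
  exact this.continuous
lemma os_core {L m c : ℝ} (hL : 0 < L) (hm : 0 < m) (hc : 0 < c)
    {u v W : ℝ → ℝ}
    (hu : ∀ t ∈ Icc (0:ℝ) L, HasDerivAt u (v t) t)
    (hv : ∀ t ∈ Ioo (0:ℝ) L, HasDerivAt v (W t) t)
    (hvc : ContinuousOn v (Icc 0 L))
    (hupos : ∀ t ∈ Icc (0:ℝ) L, 0 < u t)
    (hcon : ∀ t ∈ Ioo (0:ℝ) L, v t ^ 2 + c ≤ u t * W t)
    (hu0 : u 0 = m) (hv0 : 0 ≤ v 0) :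
    c^2 * L^3 / (3 * m^2) ≤ ∫ t in (0:ℝ)..L, v t ^ 2 := by
  have hIcc : Convex ℝ (Icc (0:ℝ) L) := convex_Icc _ _
  have hint : interior (Icc (0:ℝ) L) = Ioo 0 L := interior_Icc
  have huc : ContinuousOn u (Icc 0 L) := fun t ht => ((hu t ht).continuousAt).continuousWithinAt
  have hWpos : ∀ t ∈ Ioo (0:ℝ) L, 0 < W t := by
    intro t ht
    have h1 := hcon t ht
    have h2 : 0 < u t := hupos t (Ioo_subset_Icc_self ht)
    nlinarith [sq_nonneg (v t)]
  have hvmono : MonotoneOn v (Icc 0 L) := by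
    apply monotoneOn_of_deriv_nonneg hIcc hvc
    · intro t ht; rw [hint] at ht; exact ((hv t ht).differentiableAt).differentiableWithinAt
    · intro t ht; rw [hint] at ht; rw [(hv t ht).deriv]; exact (hWpos t ht).le
  have hvnn : ∀ t ∈ Icc (0:ℝ) L, 0 ≤ v t := fun t ht =>
    le_trans hv0 (hvmono (left_mem_Icc.2 hL.le) ht ht.1)
  have humono : MonotoneOn u (Icc 0 L) := by
    apply monotoneOn_of_deriv_nonneg hIcc huc
    · intro t ht; rw [hint] at ht
      exact ((hu t (Ioo_subset_Icc_self ht)).differentiableAt).differentiableWithinAt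
    · intro t ht; rw [hint] at ht; rw [(hu t (Ioo_subset_Icc_self ht)).deriv]
      exact hvnn t (Ioo_subset_Icc_self ht)
  have hum : ∀ t ∈ Icc (0:ℝ) L, m ≤ u t := by
    intro t ht
    calc m = u 0 := hu0.symm
    _ ≤ u t := humono (left_mem_Icc.2 hL.le) ht ht.1
  -- Gronwall quantity
  set D : ℝ → ℝ := fun t => v t ^ 2 - (c/m^2) * u t ^ 2 + c with hDdef
  set R : ℝ → ℝ := fun t => D t / u t ^ 2 with hRdef
  have hDderiv : ∀ t ∈ Ioo (0:ℝ) L,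
      HasDerivAt D (2 * v t * W t - (c/m^2) * (2 * u t * v t)) t := by
    intro t ht
    have hv2 : HasDerivAt (fun s => v s ^ 2) (2 * v t * W t) t := by
      have := (hv t ht).fun_pow 2
      simpa [mul_comm, mul_assoc] using this
    have hu2 : HasDerivAt (fun s => u s ^ 2) (2 * u t * v t) t := by
      have := (hu t (Ioo_subset_Icc_self ht)).fun_pow 2
      simpa [mul_comm, mul_assoc] using this
    exact (hv2.sub (hu2.const_mul (c/m^2))).add_const c
  have hu2deriv : ∀ t ∈ Ioo (0:ℝ) L, HasDerivAt (fun s => u s ^ 2) (2 * u t * v t) t := by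
    intro t ht
    have := (hu t (Ioo_subset_Icc_self ht)).fun_pow 2
    simpa [mul_comm, mul_assoc] using this
  have hRc : ContinuousOn R (Icc 0 L) := by
    apply ContinuousOn.div
    · exact ((hvc.pow 2).sub (continuousOn_const.mul (huc.pow 2))).add continuousOn_const
    · exact huc.pow 2
    · intro t ht; exact pow_ne_zero 2 (hupos t ht).ne'
  have hRmono : MonotoneOn R (Icc 0 L) := by
    apply monotoneOn_of_deriv_nonneg hIcc hRc
    · intro t ht; rw [hint] at ht
      have hune : u t ^ 2 ≠ 0 := pow_ne_zero 2 (hupos t (Ioo_subset_Icc_self ht)).ne'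
      exact (((hDderiv t ht).div (hu2deriv t ht) hune).differentiableAt).differentiableWithinAt
    · intro t ht; rw [hint] at ht
      have htI := Ioo_subset_Icc_self ht
      have hupt : 0 < u t := hupos t htI
      have hune : u t ^ 2 ≠ 0 := pow_ne_zero 2 hupt.ne'
      rw [((hDderiv t ht).fun_div (hu2deriv t ht) hune).deriv]
      apply div_nonneg _ (sq_nonneg _)
      have key : (2 * v t * W t - c / m ^ 2 * (2 * u t * v t)) * u t ^ 2
          - D t * (2 * u t * v t) = 2 * u t * v t * (u t * W t - v t ^ 2 - c) := by
        simp only [hDdef]; ring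
      rw [key]
      have h1 := hcon t ht
      have h2 := hvnn t htI
      have h3 : (0:ℝ) ≤ u t * W t - v t ^ 2 - c := by linarith
      positivity
  have hDnn : ∀ t ∈ Icc (0:ℝ) L, 0 ≤ D t := by
    intro t ht
    have h0 : R 0 ≤ R t := hRmono (left_mem_Icc.2 hL.le) ht ht.1
    have hR0 : 0 ≤ R 0 := by
      have : R 0 = v 0 ^ 2 / m ^ 2 := by
        simp only [hRdef, hDdef, hu0]
        field_simp
        ring
      rw [this]; positivity
    have : 0 ≤ R t := le_trans hR0 h0
    have hupt : 0 < u t ^ 2 := pow_pos (hupos t ht) 2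
    have := (div_nonneg_iff.mp this)
    rcases this with ⟨h,_⟩|⟨_,h⟩
    · exact h
    · nlinarith
  -- W ≥ c/m on the interior
  have hWm : ∀ t ∈ Ioo (0:ℝ) L, c / m ≤ W t := by
    intro t ht
    have htI := Ioo_subset_Icc_self ht
    have hD := hDnn t htI
    have h1 := hcon t ht
    have hupt : 0 < u t := hupos t htI
    -- from D ≥ 0 : c * u t ^2 ≤ m^2 * (v t ^2 + c)
    have h2 : c * u t ^ 2 ≤ m ^ 2 * (v t ^ 2 + c) := by
      have h5 : 0 ≤ v t ^ 2 - (c/m^2) * u t ^ 2 + c := hD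
      have hm2 : (0:ℝ) < m ^ 2 := pow_pos hm 2
      have key : m^2*(v t^2+c) - c*u t^2 = m^2 * (v t^2 - (c/m^2)*u t^2 + c) := by
        field_simp
        ring
      nlinarith [mul_nonneg hm2.le h5]
    have hsum : 0 < m*(v t^2+c) + c*u t := by positivity
    have hprod : 0 ≤ (m*(v t^2+c) - c*u t) * (m*(v t^2+c) + c*u t) := by
      nlinarith [mul_le_mul_of_nonneg_left h2 hc.le,
        mul_nonneg (mul_nonneg (sq_nonneg m) (sq_nonneg (v t))) (add_nonneg (sq_nonneg (v t)) hc.le)]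
    have h3 : c * u t ≤ m * (v t ^ 2 + c) := by
      by_contra hneg
      push_neg at hneg
      nlinarith
    rw [div_le_iff₀ hm]
    nlinarith [mul_le_mul_of_nonneg_left h1 hm.le]
  -- v t ≥ (c/m) t
  have hvlin : ∀ t ∈ Icc (0:ℝ) L, (c/m) * t ≤ v t := by
    intro t ht
    set g : ℝ → ℝ := fun s => v s - (c/m) * s with hgdef
    have hgc : ContinuousOn g (Icc 0 L) :=
      hvc.sub ((continuousOn_const.mul continuousOn_id))
    have hgmono : MonotoneOn g (Icc 0 L) := by
      apply monotoneOn_of_deriv_nonneg hIcc hgc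
      · intro s hs; rw [hint] at hs
        exact (((hv s hs).sub ((hasDerivAt_id s).const_mul (c/m))).differentiableAt).differentiableWithinAt
      · intro s hs; rw [hint] at hs
        have hd : HasDerivAt g (W s - c/m) s := by
          simpa [hgdef, mul_comm] using (hv s hs).fun_sub ((hasDerivAt_id s).const_mul (c/m))
        rw [hd.deriv]
        have := hWm s hs
        linarith
    have h0 : g 0 ≤ g t := hgmono (left_mem_Icc.2 hL.le) ht ht.1
    have hg0 : 0 ≤ g 0 := by simpa [hgdef] using hv0
    have : 0 ≤ g t := le_trans hg0 h0
    simpa [hgdef] using this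
  -- integrate
  have hi1 : IntervalIntegrable (fun t => ((c/m) * t)^2) volume 0 L :=
    ((continuous_const.mul continuous_id).pow 2).intervalIntegrable 0 L
  have hi2 : IntervalIntegrable (fun t => v t ^ 2) volume 0 L := by
    apply ContinuousOn.intervalIntegrable
    rw [uIcc_of_le hL.le]
    exact hvc.pow 2
  have hmono := intervalIntegral.integral_mono_on hL.le hi1 hi2 (fun t ht => by
    have h1 := hvlin t ht
    have h2 : 0 ≤ (c/m) * t := mul_nonneg (div_nonneg hc.le hm.le) ht.1
    exact pow_le_pow_left₀ h2 h1 2)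
  calc c^2 * L^3 / (3 * m^2) = ∫ t in (0:ℝ)..L, ((c/m) * t)^2 := by
        rw [show (fun t => ((c/m)*t)^2) = (fun t => (c/m)^2 * t^2) by funext t; ring]
        rw [intervalIntegral.integral_const_mul, integral_pow]
        field_simp
        ring
  _ ≤ ∫ t in (0:ℝ)..L, v t ^ 2 := hmono

lemma two_side {h c : ℝ} (hh : 0 < h) (hc : 0 < c) {u v W : ℝ → ℝ}
    (hu : ∀ x ∈ Icc (0:ℝ) h, HasDerivAt u (v x) x)
    (hv : ∀ x ∈ Ioo (0:ℝ) h, HasDerivAt v (W x) x)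
    (hvc : ContinuousOn v (Icc 0 h))
    (hupos : ∀ x ∈ Icc (0:ℝ) h, 0 < u x)
    (hcon : ∀ x ∈ Ioo (0:ℝ) h, v x ^ 2 + c ≤ u x * W x) :
    c^2 * h^4 / 12 ≤ (∫ x in (0:ℝ)..h, v x ^ 2) * (∫ x in (0:ℝ)..h, u x ^ 2) := by
  have huc : ContinuousOn u (Icc 0 h) := fun t ht => ((hu t ht).continuousAt).continuousWithinAt
  obtain ⟨xm, hxmI, hmin⟩ := isCompact_Icc.exists_isMinOn ⟨0, left_mem_Icc.2 hh.le⟩ huc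
  set m := u xm with hmdef
  have hm : 0 < m := hupos xm hxmI
  have hxm0 : 0 ≤ xm := hxmI.1
  have hxmh : xm ≤ h := hxmI.2
  -- sign of v at xm
  have hsignR : xm < h → 0 ≤ v xm := by
    intro hlt
    have hd := (hu xm hxmI)
    rw [hasDerivAt_iff_tendsto_slope] at hd
    have hd' : Filter.Tendsto (slope u xm) (nhdsWithin xm (Ioi xm)) (nhds (v xm)) :=
      hd.mono_left (nhdsWithin_mono xm (fun y hy => ne_of_gt hy))
    apply ge_of_tendsto hd'
    filter_upwards [Ioo_mem_nhdsGT_of_mem ⟨le_refl xm, hlt⟩] with y hy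
    have hyI : y ∈ Icc (0:ℝ) h := ⟨le_trans hxm0 (le_of_lt hy.1), hy.2.le⟩
    have h1 : u xm ≤ u y := hmin hyI
    have h2 : 0 < y - xm := sub_pos.2 hy.1
    rw [slope_def_field]
    exact div_nonneg (by linarith) h2.le
  have hsignL : 0 < xm → v xm ≤ 0 := by
    intro hlt
    have hd := (hu xm hxmI)
    rw [hasDerivAt_iff_tendsto_slope] at hd
    have hd' : Filter.Tendsto (slope u xm) (nhdsWithin xm (Iio xm)) (nhds (v xm)) :=
      hd.mono_left (nhdsWithin_mono xm (fun y hy => ne_of_lt hy))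
    apply le_of_tendsto hd'
    filter_upwards [Ioo_mem_nhdsLT_of_mem ⟨hlt, le_refl xm⟩] with y hy
    have hyI : y ∈ Icc (0:ℝ) h := ⟨hy.1.le, le_trans hy.2.le hxmh⟩
    have h1 : u xm ≤ u y := hmin hyI
    have h2 : y - xm < 0 := sub_neg.2 hy.2
    rw [slope_def_field]
    exact div_nonpos_of_nonneg_of_nonpos (by linarith) h2.le
  -- right side bound
  have Hright : c^2 * (h - xm)^3 / (3 * m^2) ≤ ∫ x in xm..h, v x ^ 2 := by
    rcases eq_or_lt_of_le hxmh with heq | hlt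
    · rw [heq]; simp
    · have hL : 0 < h - xm := sub_pos.2 hlt
      have key := os_core (u := fun t => u (xm + t)) (v := fun t => v (xm + t))
        (W := fun t => W (xm + t)) hL hm hc
        (fun t ht => by
          have hmem : xm + t ∈ Icc (0:ℝ) h := ⟨by linarith [ht.1], by linarith [ht.2]⟩
          have := (hu _ hmem).comp t ((hasDerivAt_id t).const_add xm)
          simpa [Function.comp_def] using this)
        (fun t ht => by
          have hmem : xm + t ∈ Ioo (0:ℝ) h := ⟨by linarith [ht.1], by linarith [ht.2]⟩
          have := (hv _ hmem).comp t ((hasDerivAt_id t).const_add xm)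
          simpa [Function.comp_def] using this)
        (by
          apply hvc.comp (Continuous.continuousOn (by continuity))
          intro t ht
          exact ⟨by linarith [ht.1], by linarith [ht.2]⟩)
        (fun t ht => hupos _ ⟨by linarith [ht.1], by linarith [ht.2]⟩)
        (fun t ht => hcon _ ⟨by linarith [ht.1], by linarith [ht.2]⟩)
        (by simp [hmdef])
        (by simpa using hsignR hlt)
      calc c^2 * (h - xm)^3 / (3 * m^2) ≤ ∫ t in (0:ℝ)..(h - xm), v (xm + t) ^ 2 := key
      _ = ∫ x in xm..h, v x ^ 2 := by
          have := intervalIntegral.integral_comp_add_left (a := (0:ℝ)) (b := h - xm)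
            (fun x => v x ^ 2) xm
          simpa using this
  -- left side bound
  have Hleft : c^2 * xm^3 / (3 * m^2) ≤ ∫ x in (0:ℝ)..xm, v x ^ 2 := by
    rcases eq_or_lt_of_le hxm0 with heq | hlt
    · rw [← heq]; simp
    · have key := os_core (u := fun t => u (xm - t)) (v := fun t => -v (xm - t))
        (W := fun t => W (xm - t)) hlt hm hc
        (fun t ht => by
          have hmem : xm - t ∈ Icc (0:ℝ) h := ⟨by linarith [ht.2], by linarith [ht.1, hxmh]⟩
          have hinner : HasDerivAt (fun s : ℝ => xm - s) (-1 : ℝ) t := by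
            exact (hasDerivAt_id t).const_sub xm
          have := (hu _ hmem).comp t hinner
          simpa [Function.comp_def] using this)
        (fun t ht => by
          have hmem : xm - t ∈ Ioo (0:ℝ) h := ⟨by linarith [ht.2], by linarith [ht.1, hxmh]⟩
          have hinner : HasDerivAt (fun s : ℝ => xm - s) (-1 : ℝ) t := by
            exact (hasDerivAt_id t).const_sub xm
          have := ((hv _ hmem).comp t hinner).neg
          simpa [Function.comp_def, Pi.neg_def] using this)
        (by
          apply ContinuousOn.neg
          apply hvc.comp (Continuous.continuousOn (by continuity))
          intro t ht
          exact ⟨by linarith [ht.2], by linarith [ht.1, hxmh]⟩)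
        (fun t ht => hupos _ ⟨by linarith [ht.2], by linarith [ht.1, hxmh]⟩)
        (fun t ht => by
          have := hcon _ (⟨by linarith [ht.2], by linarith [ht.1, hxmh]⟩ : xm - t ∈ Ioo (0:ℝ) h)
          simpa using this)
        (by simp [hmdef])
        (by simpa using hsignL hlt)
      calc c^2 * xm^3 / (3 * m^2) ≤ ∫ t in (0:ℝ)..xm, (-v (xm - t)) ^ 2 := key
      _ = ∫ t in (0:ℝ)..xm, v (xm - t) ^ 2 := by
          congr 1; funext t; ring
      _ = ∫ x in (0:ℝ)..xm, v x ^ 2 := by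
          have := intervalIntegral.integral_comp_sub_left (a := (0:ℝ)) (b := xm)
            (fun x => v x ^ 2) xm
          simpa using this
  -- combine
  have hvInt : ∀ p q : ℝ, p ∈ Icc (0:ℝ) h → q ∈ Icc (0:ℝ) h →
      IntervalIntegrable (fun x => v x ^ 2) volume p q := by
    intro p q hp hq
    apply ContinuousOn.intervalIntegrable
    apply (hvc.pow 2).mono
    intro z hz
    rcases le_total p q with hpq | hpq
    · rw [uIcc_of_le hpq] at hz
      exact ⟨le_trans hp.1 hz.1, le_trans hz.2 hq.2⟩
    · rw [uIcc_of_ge hpq] at hz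
      exact ⟨le_trans hq.1 hz.1, le_trans hz.2 hp.2⟩
  have hsplit : (∫ x in (0:ℝ)..xm, v x ^ 2) + (∫ x in xm..h, v x ^ 2)
      = ∫ x in (0:ℝ)..h, v x ^ 2 :=
    intervalIntegral.integral_add_adjacent_intervals
      (hvInt 0 xm (left_mem_Icc.2 hh.le) hxmI) (hvInt xm h hxmI (right_mem_Icc.2 hh.le))
  have Hv : c^2 * h^3 / (12 * m^2) ≤ ∫ x in (0:ℝ)..h, v x ^ 2 := by
    rw [← hsplit]
    have hcube : h^3 / 4 ≤ xm^3 + (h - xm)^3 := by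
      nlinarith [mul_nonneg (mul_nonneg hxm0 (sub_nonneg.2 hxmh)) hh.le,
        sq_nonneg (xm - (h - xm)), mul_nonneg hxm0 (sub_nonneg.2 hxmh)]
    have hm2 : (0:ℝ) < m^2 := pow_pos hm 2
    have : c^2 * h^3 / (12 * m^2) ≤ c^2 * xm^3 / (3 * m^2) + c^2 * (h - xm)^3 / (3 * m^2) := by
      rw [← add_div, div_le_div_iff₀ (by positivity) (by positivity)]
      nlinarith [mul_le_mul_of_nonneg_left hcube (mul_nonneg (sq_nonneg c) hm2.le)]
    linarith [Hleft, Hright]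
  -- lower bound for ∫ u²
  have Hu : m^2 * h ≤ ∫ x in (0:ℝ)..h, u x ^ 2 := by
    have hui : IntervalIntegrable (fun x => u x ^ 2) volume 0 h := by
      apply ContinuousOn.intervalIntegrable
      rw [uIcc_of_le hh.le]
      exact huc.pow 2
    have hci : IntervalIntegrable (fun _ : ℝ => m^2) volume 0 h :=
      intervalIntegrable_const
    have := intervalIntegral.integral_mono_on hh.le hci hui (fun x hx => by
      exact pow_le_pow_left₀ hm.le (hmin hx) 2)
    simpa [mul_comm] using this
  have Hvnn : (0:ℝ) ≤ ∫ x in (0:ℝ)..h, v x ^ 2 := by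
    have : (0:ℝ) < c^2 * h^3 / (12 * m^2) := by positivity
    linarith
  calc c^2 * h^4 / 12 = (c^2 * h^3 / (12 * m^2)) * (m^2 * h) := by
        field_simp
  _ ≤ (∫ x in (0:ℝ)..h, v x ^ 2) * (∫ x in (0:ℝ)..h, u x ^ 2) := by
        apply mul_le_mul Hv Hu (by positivity) Hvnn

lemma cs_interval {p : ℝ} (hp : 0 ≤ p) {f g : ℝ → ℝ} (hf : Continuous f) (hg : Continuous g) :
    (∫ y in (0:ℝ)..p, f y * g y)^2 ≤ (∫ y in (0:ℝ)..p, f y ^ 2) * (∫ y in (0:ℝ)..p, g y ^ 2) := by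
  set A := ∫ y in (0:ℝ)..p, f y ^ 2 with hA
  set B := ∫ y in (0:ℝ)..p, f y * g y with hB
  set Cc := ∫ y in (0:ℝ)..p, g y ^ 2 with hC
  have hCnn : 0 ≤ Cc := intervalIntegral.integral_nonneg hp (fun y _ => sq_nonneg _)
  have expand : ∀ lam : ℝ, 0 ≤ A - 2*lam*B + lam^2*Cc := by
    intro lam
    have h1 : 0 ≤ ∫ y in (0:ℝ)..p, (f y - lam * g y)^2 :=
      intervalIntegral.integral_nonneg hp (fun y _ => sq_nonneg _)
    have h2 : ∫ y in (0:ℝ)..p, (f y - lam*g y)^2 = A - 2*lam*B + lam^2*Cc := by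
      have e1 : (fun y => (f y - lam*g y)^2)
          = fun y => (f y^2 - (2*lam)*(f y*g y)) + lam^2*(g y^2) := by
        funext y; ring
      have i1 : IntervalIntegrable (fun y => f y ^ 2) volume 0 p :=
        (hf.pow 2).intervalIntegrable 0 p
      have i2 : IntervalIntegrable (fun y => (2*lam)*(f y * g y)) volume 0 p :=
        (continuous_const.mul (hf.mul hg)).intervalIntegrable 0 p
      have i3 : IntervalIntegrable (fun y => lam^2*(g y ^ 2)) volume 0 p :=
        (continuous_const.mul (hg.pow 2)).intervalIntegrable 0 p
      rw [e1, intervalIntegral.integral_add (i1.sub i2) i3,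
        intervalIntegral.integral_sub i1 i2,
        intervalIntegral.integral_const_mul, intervalIntegral.integral_const_mul]
      try ring
    linarith [h1, h2.symm.le]
  rcases eq_or_lt_of_le hCnn with hC0 | hCpos
  · have hB0 : B = 0 := by
      by_contra hB0
      have h1 := expand ((A + 1)/(2*B))
      rw [← hC0] at h1
      have h2 : A - 2*((A+1)/(2*B))*B = -1 := by
        field_simp
        try ring
      nlinarith
    rw [hB0, ← hC0]
    simp
  · have h1 := expand (B/Cc)
    have h2 : A - 2*(B/Cc)*B + (B/Cc)^2*Cc = A - B^2/Cc := by
      field_simp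
      try ring
    rw [h2] at h1
    rw [← sub_nonneg]
    have : A*Cc - B^2 = (A - B^2/Cc)*Cc := by field_simp
    rw [this]
    exact mul_nonneg h1 hCpos.le
lemma param_hasDerivAt {p : ℝ} {F Fx : ℝ × ℝ → ℝ} (hF : Continuous F) (hFx : Continuous Fx)
    (hd : ∀ q : ℝ × ℝ, HasDerivAt (fun s => F (s, q.2)) (Fx q) q.1) (x₀ : ℝ) :
    HasDerivAt (fun x => ∫ y in (0:ℝ)..p, F (x, y)) (∫ y in (0:ℝ)..p, Fx (x₀, y)) x₀ := by
  have hK : IsCompact (Icc (x₀ - 1) (x₀ + 1) ×ˢ uIcc 0 p) :=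
    isCompact_Icc.prod isCompact_uIcc
  obtain ⟨C, hC⟩ := hK.exists_bound_of_continuousOn hFx.continuousOn
  have key := intervalIntegral.hasDerivAt_integral_of_dominated_loc_of_deriv_le
    (F := fun x y => F (x, y)) (F' := fun x y => Fx (x, y)) (x₀ := x₀)
    (a := 0) (b := p) (μ := volume) (bound := fun _ => C) (s := Metric.ball x₀ 1) (Metric.ball_mem_nhds x₀ one_pos)
    ?_ ?_ ?_ ?_ ?_ ?_
  · exact key.2
  · filter_upwards with x
    exact (hF.comp (continuous_const.prodMk continuous_id)).aestronglyMeasurable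
  · exact (hF.comp (continuous_const.prodMk continuous_id)).intervalIntegrable 0 p
  · exact (hFx.comp (continuous_const.prodMk continuous_id)).aestronglyMeasurable
  · filter_upwards with y hy x hx
    apply hC
    constructor
    · constructor
      · have := abs_lt.mp (by simpa [Real.dist_eq] using hx)
        linarith [this.1]
      · have := abs_lt.mp (by simpa [Real.dist_eq] using hx)
        linarith [this.2]
    · exact uIoc_subset_uIcc hy
  · exact intervalIntegrable_const
  · filter_upwards with y hy x hx
    exact hd (x, y)

end Aux

set_option maxHeartbeats 1600000 in
/-- Lemma 3.3: sharp estimate for harmonic functions on a thin rectangle with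
zero Dirichlet data on the long sides. -/
theorem stmt0 (h p : ℝ) (hh : 0 < h) (hp : 0 < p)
    (w : ℝ × ℝ → ℝ) (hw : ContDiff ℝ 2 w)
    (hharm : ∀ q ∈ Ioo 0 h ×ˢ Ioo 0 p, pdx (pdx w) q + pdy (pdy w) q = 0)
    (hbc : ∀ x ∈ Ioo 0 h, w (x, 0) = 0 ∧ w (x, p) = 0) :
    (L2 (Ioo 0 h ×ˢ Ioo 0 p) (pdy w)) ^ 2 ≤
      (2 * Real.sqrt 3 / h) * L2 (Ioo 0 h ×ˢ Ioo 0 p) (pdx w) *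
        L2 (Ioo 0 h ×ˢ Ioo 0 p) w
      + (L2 (Ioo 0 h ×ˢ Ioo 0 p) (pdx w)) ^ 2 := by
  have hwd : Differentiable ℝ w := hw.differentiable two_ne_zero
  have hwc : Continuous w := hw.continuous
  have hpxd : Differentiable ℝ (pdx w) := differentiable_pdx hw
  have hpyd : Differentiable ℝ (pdy w) := differentiable_pdy hw
  have hpx1 : ContDiff ℝ 1 (pdx w) := contDiff_pdx (n := 1) (by exact_mod_cast hw)
  have hpy1 : ContDiff ℝ 1 (pdy w) := contDiff_pdy (n := 1) (by exact_mod_cast hw)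
  have hpxc : Continuous (pdx w) := hpx1.continuous
  have hpyc : Continuous (pdy w) := hpy1.continuous
  have hpxxc : Continuous (pdx (pdx w)) := continuous_pdx_of_contDiff_one hpx1
  have hpyxc : Continuous (pdx (pdy w)) := continuous_pdx_of_contDiff_one hpy1
  have hpyyc : Continuous (pdy (pdy w)) := continuous_pdy_of_contDiff_one hpy1
  have hsliceC : ∀ {f2 : ℝ × ℝ → ℝ}, Continuous f2 → ∀ x : ℝ, Continuous (fun y => f2 (x, y)) :=
    fun hf2 x => hf2.comp (continuous_const.prodMk continuous_id)
  -- one-dimensional quantities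
  set ψ : ℝ → ℝ := fun x => ∫ y in (0:ℝ)..p, (w (x,y))^2 with hψdef
  set G : ℝ → ℝ := fun x => ∫ y in (0:ℝ)..p, w (x,y) * pdx w (x,y) with hGdef
  set Af : ℝ → ℝ := fun x => ∫ y in (0:ℝ)..p, (pdx w (x,y))^2 with hAdef
  set Bf : ℝ → ℝ := fun x => ∫ y in (0:ℝ)..p, (pdy w (x,y))^2 with hBdef
  -- derivatives of the 1-D quantities
  have hψ' : ∀ x : ℝ, HasDerivAt ψ (2 * G x) x := by
    intro x
    have key := param_hasDerivAt (p := p) (F := fun q => (w q)^2)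
      (Fx := fun q => 2 * (w q * pdx w q)) (hwc.pow 2)
      ((continuous_const.mul (hwc.mul hpxc)))
      (fun q => by
        have h1 := (hasDerivAt_pdx_slice hwd q.1 q.2).const_mul (2 : ℝ)
        have h0 := hasDerivAt_pdx_slice hwd q.1 q.2
        have := (hasDerivAt_fst hwd q.1 q.2)
        have h2 : HasDerivAt (fun s => (w (s, q.2))^2)
            (2 * (w (q.1, q.2) * pdx w (q.1, q.2))) q.1 := by
          have h3 := (hasDerivAt_pdx_slice hwd q.1 q.2)
          have h4 := h3.fun_pow 2
          simpa [mul_comm, mul_assoc, mul_left_comm] using h4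
        simpa using h2) x
    have : (∫ y in (0:ℝ)..p, 2 * (w (x,y) * pdx w (x,y))) = 2 * G x := by
      rw [intervalIntegral.integral_const_mul]
    rwa [this] at key
  have hG' : ∀ x : ℝ, HasDerivAt G
      (Af x + ∫ y in (0:ℝ)..p, w (x,y) * pdx (pdx w) (x,y)) x := by
    intro x
    have key := param_hasDerivAt (p := p) (F := fun q => w q * pdx w q)
      (Fx := fun q => pdx w q * pdx w q + w q * pdx (pdx w) q)
      (hwc.mul hpxc) ((hpxc.mul hpxc).add (hwc.mul hpxxc))
      (fun q => (hasDerivAt_pdx_slice hwd q.1 q.2).mul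
        (hasDerivAt_pdx_slice hpxd q.1 q.2)) x
    have heq : (∫ y in (0:ℝ)..p, (pdx w (x,y) * pdx w (x,y) + w (x,y) * pdx (pdx w) (x,y)))
        = Af x + ∫ y in (0:ℝ)..p, w (x,y) * pdx (pdx w) (x,y) := by
      have i1 : IntervalIntegrable (fun y => pdx w (x,y) * pdx w (x,y)) volume 0 p :=
        (hsliceC (hpxc.mul hpxc) x).intervalIntegrable 0 p
      have i2 : IntervalIntegrable (fun y => w (x,y) * pdx (pdx w) (x,y)) volume 0 p :=
        (hsliceC (hwc.mul hpxxc) x).intervalIntegrable 0 p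
      rw [intervalIntegral.integral_add i1 i2]
      congr 1
      simp [hAdef, pow_two]
    rwa [heq] at key
  have hA' : ∀ x : ℝ, HasDerivAt Af
      (∫ y in (0:ℝ)..p, 2 * (pdx w (x,y) * pdx (pdx w) (x,y))) x := by
    intro x
    exact param_hasDerivAt (p := p) (F := fun q => (pdx w q)^2)
      (Fx := fun q => 2 * (pdx w q * pdx (pdx w) q)) (hpxc.pow 2)
      (continuous_const.mul (hpxc.mul hpxxc))
      (fun q => by
        have h4 := (hasDerivAt_pdx_slice hpxd q.1 q.2).fun_pow 2
        simpa [mul_comm, mul_assoc, mul_left_comm] using h4) x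
  have hB' : ∀ x : ℝ, HasDerivAt Bf
      (∫ y in (0:ℝ)..p, 2 * (pdy w (x,y) * pdx (pdy w) (x,y))) x := by
    intro x
    exact param_hasDerivAt (p := p) (F := fun q => (pdy w q)^2)
      (Fx := fun q => 2 * (pdy w q * pdx (pdy w) q)) (hpyc.pow 2)
      (continuous_const.mul (hpyc.mul hpyxc))
      (fun q => by
        have h4 := (hasDerivAt_pdx_slice hpyd q.1 q.2).fun_pow 2
        simpa [mul_comm, mul_assoc, mul_left_comm] using h4) x
  -- boundary values of pdx w vanish on the bottom and top edges
  have hbx0 : ∀ x ∈ Ioo (0:ℝ) h, pdx w (x, 0) = 0 ∧ pdx w (x, p) = 0 := by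
    intro x hx
    constructor
    · have hev : (fun s => w (s, (0:ℝ))) =ᶠ[nhds x] (fun _ => (0:ℝ)) := by
        filter_upwards [Ioo_mem_nhds hx.1 hx.2] with s hs
        exact (hbc s hs).1
      show deriv (fun s => w (s, (0:ℝ))) x = 0
      rw [hev.deriv_eq]
      exact deriv_const x 0
    · have hev : (fun s => w (s, p)) =ᶠ[nhds x] (fun _ => (0:ℝ)) := by
        filter_upwards [Ioo_mem_nhds hx.1 hx.2] with s hs
        exact (hbc s hs).2
      show deriv (fun s => w (s, p)) x = 0
      rw [hev.deriv_eq]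
      exact deriv_const x 0
  -- interior integration by parts : Bf = ∫ w ⋅ w_xx
  have hBeq : ∀ x ∈ Ioo (0:ℝ) h, Bf x = ∫ y in (0:ℝ)..p, w (x,y) * pdx (pdx w) (x,y) := by
    intro x hx
    have hibp := intervalIntegral.integral_deriv_mul_eq_sub
      (u := fun y => w (x,y)) (u' := fun y => pdy w (x,y))
      (v := fun y => pdy w (x,y)) (v' := fun y => pdy (pdy w) (x,y))
      (fun y _ => hasDerivAt_pdy_slice hwd x y)
      (fun y _ => hasDerivAt_pdy_slice hpyd x y)
      ((hsliceC hpyc x).intervalIntegrable 0 p)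
      ((hsliceC hpyyc x).intervalIntegrable 0 p)
    simp only [(hbc x hx).1, (hbc x hx).2, zero_mul, sub_zero, mul_zero, sub_self] at hibp
    have i1 : IntervalIntegrable (fun y => pdy w (x,y) * pdy w (x,y)) volume 0 p :=
      (hsliceC (hpyc.mul hpyc) x).intervalIntegrable 0 p
    have i2 : IntervalIntegrable (fun y => w (x,y) * pdy (pdy w) (x,y)) volume 0 p :=
      (hsliceC (hwc.mul hpyyc) x).intervalIntegrable 0 p
    rw [intervalIntegral.integral_add i1 i2] at hibp
    have e1 : Bf x = ∫ y in (0:ℝ)..p, pdy w (x,y) * pdy w (x,y) := by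
      simp [hBdef, pow_two]
    have e2 : (∫ y in (0:ℝ)..p, w (x,y) * pdy (pdy w) (x,y))
        = - ∫ y in (0:ℝ)..p, w (x,y) * pdx (pdx w) (x,y) := by
      rw [← intervalIntegral.integral_neg]
      rw [intervalIntegral.integral_of_le hp.le, intervalIntegral.integral_of_le hp.le]
      rw [MeasureTheory.integral_Ioc_eq_integral_Ioo, MeasureTheory.integral_Ioc_eq_integral_Ioo]
      apply MeasureTheory.setIntegral_congr_fun measurableSet_Ioo
      intro y hy
      have hq := hharm (x, y) ⟨hx, hy⟩
      show w (x,y) * pdy (pdy w) (x,y) = -(w (x,y) * pdx (pdx w) (x,y))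
      linear_combination (w (x,y)) * hq
    rw [e2] at hibp
    rw [e1]
    linarith
  -- constancy of Bf - Af on the interior
  have hBA' : ∀ x ∈ Ioo (0:ℝ) h, HasDerivAt (fun t => Bf t - Af t) 0 x := by
    intro x hx
    have hD := (hB' x).sub (hA' x)
    have hval : (∫ y in (0:ℝ)..p, 2 * (pdy w (x,y) * pdx (pdy w) (x,y)))
        - (∫ y in (0:ℝ)..p, 2 * (pdx w (x,y) * pdx (pdx w) (x,y))) = 0 := by
      have i1 : IntervalIntegrable (fun y => 2 * (pdy w (x,y) * pdx (pdy w) (x,y))) volume 0 p :=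
        (hsliceC (continuous_const.mul (hpyc.mul hpyxc)) x).intervalIntegrable 0 p
      have i2 : IntervalIntegrable (fun y => 2 * (pdx w (x,y) * pdx (pdx w) (x,y))) volume 0 p :=
        (hsliceC (continuous_const.mul (hpxc.mul hpxxc)) x).intervalIntegrable 0 p
      rw [← intervalIntegral.integral_sub i1 i2]
      have hibp2 := intervalIntegral.integral_deriv_mul_eq_sub
        (u := fun y => pdx w (x,y)) (u' := fun y => pdy (pdx w) (x,y))
        (v := fun y => pdy w (x,y)) (v' := fun y => pdy (pdy w) (x,y))
        (fun y _ => hasDerivAt_pdy_slice hpxd x y)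
        (fun y _ => hasDerivAt_pdy_slice hpyd x y)
        ((hsliceC (continuous_pdy_of_contDiff_one hpx1) x).intervalIntegrable 0 p)
        ((hsliceC hpyyc x).intervalIntegrable 0 p)
      simp only [(hbx0 x hx).1, (hbx0 x hx).2, zero_mul, mul_zero, sub_zero, sub_self] at hibp2
      have hcg : (∫ y in (0:ℝ)..p,
          (2 * (pdy w (x,y) * pdx (pdy w) (x,y)) - 2 * (pdx w (x,y) * pdx (pdx w) (x,y))))
          = ∫ y in (0:ℝ)..p,
            2 * (pdy (pdx w) (x,y) * pdy w (x,y) + pdx w (x,y) * pdy (pdy w) (x,y)) := by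
        rw [intervalIntegral.integral_of_le hp.le, intervalIntegral.integral_of_le hp.le]
        rw [MeasureTheory.integral_Ioc_eq_integral_Ioo, MeasureTheory.integral_Ioc_eq_integral_Ioo]
        apply MeasureTheory.setIntegral_congr_fun measurableSet_Ioo
        intro y hy
        have hq := hharm (x, y) ⟨hx, hy⟩
        have h2 : pdx (pdy w) (x, y) = pdy (pdx w) (x, y) := clairaut hw (x, y)
        show 2 * (pdy w (x,y) * pdx (pdy w) (x,y)) - 2 * (pdx w (x,y) * pdx (pdx w) (x,y))
            = 2 * (pdy (pdx w) (x,y) * pdy w (x,y) + pdx w (x,y) * pdy (pdy w) (x,y))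
        linear_combination 2 * pdy w (x,y) * h2 - 2 * pdx w (x,y) * hq
      rw [hcg, intervalIntegral.integral_const_mul, hibp2, mul_zero]
    rwa [hval] at hD
  -- continuity of 1-D quantities
  have hψc : Continuous ψ := by
    rw [continuous_iff_continuousAt]; exact fun x => (hψ' x).continuousAt
  have hGc : Continuous G := by
    rw [continuous_iff_continuousAt]; exact fun x => (hG' x).continuousAt
  have hAc : Continuous Af := by
    rw [continuous_iff_continuousAt]; exact fun x => (hA' x).continuousAt
  have hBc : Continuous Bf := by
    rw [continuous_iff_continuousAt]; exact fun x => (hB' x).continuousAt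
  -- the constant c
  set cst : ℝ := Bf (h/2) - Af (h/2) with hcstdef
  have hmem2 : h/2 ∈ Ioo (0:ℝ) h := ⟨by linarith, by linarith⟩
  have hconst : ∀ x ∈ Ioo (0:ℝ) h, Bf x - Af x = cst := by
    have key : ∀ x1 x2 : ℝ, x1 ∈ Ioo (0:ℝ) h → x2 ∈ Ioo (0:ℝ) h → x1 < x2 →
        Bf x1 - Af x1 = Bf x2 - Af x2 := by
      intro x1 x2 h1 h2 hlt
      obtain ⟨z, hz, hz2⟩ := exists_hasDerivAt_eq_slope (fun t => Bf t - Af t) (fun _ => 0) hlt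
        ((hBc.sub hAc).continuousOn)
        (fun z hz => hBA' z ⟨lt_trans h1.1 hz.1, lt_trans hz.2 h2.2⟩)
      have hne : x2 - x1 ≠ 0 := by linarith
      field_simp at hz2
      linarith
    intro x hx
    rcases lt_trichotomy x (h/2) with hlt | heq | hgt
    · exact key x (h/2) hx hmem2 hlt
    · rw [heq]
    · exact (key (h/2) x hmem2 hx hgt).symm
  have hconstIcc : ∀ x ∈ Icc (0:ℝ) h, Bf x - Af x = cst := by
    have hcl : Icc (0:ℝ) h = closure (Ioo 0 h) := (closure_Ioo hh.ne).symm
    rw [hcl]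
    apply Set.EqOn.closure (fun x hx => hconst x hx) (hBc.sub hAc) continuous_const
  -- Cauchy-Schwarz in y
  have hCS : ∀ x : ℝ, (G x)^2 ≤ ψ x * Af x := by
    intro x
    exact cs_interval hp.le (hsliceC hwc x) (hsliceC hpxc x)
  -- nonnegativity
  have hψnn : ∀ x : ℝ, 0 ≤ ψ x := fun x =>
    intervalIntegral.integral_nonneg hp.le (fun y _ => sq_nonneg _)
  have hAnn : ∀ x : ℝ, 0 ≤ Af x := fun x =>
    intervalIntegral.integral_nonneg hp.le (fun y _ => sq_nonneg _)
  -- Fubini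
  have fub : ∀ f2 : ℝ × ℝ → ℝ, Continuous f2 →
      ∫ z in Ioo 0 h ×ˢ Ioo 0 p, f2 z
        = ∫ x in (0:ℝ)..h, ∫ y in (0:ℝ)..p, f2 (x,y) := by
    intro f2 hf2
    have hK : IsCompact (Icc (0:ℝ) h ×ˢ Icc (0:ℝ) p) := isCompact_Icc.prod isCompact_Icc
    have h1 : IntegrableOn f2 (Icc (0:ℝ) h ×ˢ Icc (0:ℝ) p) volume :=
      hf2.continuousOn.integrableOn_compact hK
    have hInt : IntegrableOn f2 (Ioo (0:ℝ) h ×ˢ Ioo (0:ℝ) p) volume :=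
      h1.mono_set (prod_mono Ioo_subset_Icc_self Ioo_subset_Icc_self)
    have inner_eq : ∀ x : ℝ, (∫ y in (0:ℝ)..p, f2 (x,y)) = ∫ y in Ioo (0:ℝ) p, f2 (x,y) := by
      intro x
      rw [intervalIntegral.integral_of_le hp.le, MeasureTheory.integral_Ioc_eq_integral_Ioo]
    calc ∫ z in Ioo 0 h ×ˢ Ioo 0 p, f2 z
        = ∫ x in Ioo (0:ℝ) h, ∫ y in Ioo (0:ℝ) p, f2 (x,y) := by
          rw [MeasureTheory.Measure.volume_eq_prod] at hInt ⊢
          exact MeasureTheory.setIntegral_prod f2 hInt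
    _ = ∫ x in Ioo (0:ℝ) h, ∫ y in (0:ℝ)..p, f2 (x,y) := by
          apply MeasureTheory.setIntegral_congr_fun measurableSet_Ioo
          intro x _
          exact (inner_eq x).symm
    _ = ∫ x in (0:ℝ)..h, ∫ y in (0:ℝ)..p, f2 (x,y) := by
          rw [intervalIntegral.integral_of_le hh.le, MeasureTheory.integral_Ioc_eq_integral_Ioo]
  -- the three global integrals
  set IA : ℝ := ∫ x in (0:ℝ)..h, Af x with hIAdef
  set IB : ℝ := ∫ x in (0:ℝ)..h, Bf x with hIBdef
  set Iψ : ℝ := ∫ x in (0:ℝ)..h, ψ x with hIψdef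
  have hL2B : (L2 (Ioo 0 h ×ˢ Ioo 0 p) (pdy w))^2 = IB := by
    rw [L2, Real.sq_sqrt]
    · exact fub (fun q => (pdy w q)^2) (hpyc.pow 2)
    · exact MeasureTheory.setIntegral_nonneg (measurableSet_Ioo.prod measurableSet_Ioo)
        (fun q _ => sq_nonneg _)
  have hL2A : (L2 (Ioo 0 h ×ˢ Ioo 0 p) (pdx w))^2 = IA := by
    rw [L2, Real.sq_sqrt]
    · exact fub (fun q => (pdx w q)^2) (hpxc.pow 2)
    · exact MeasureTheory.setIntegral_nonneg (measurableSet_Ioo.prod measurableSet_Ioo)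
        (fun q _ => sq_nonneg _)
  have hL2ψ : (L2 (Ioo 0 h ×ˢ Ioo 0 p) w)^2 = Iψ := by
    rw [L2, Real.sq_sqrt]
    · exact fub (fun q => (w q)^2) (hwc.pow 2)
    · exact MeasureTheory.setIntegral_nonneg (measurableSet_Ioo.prod measurableSet_Ioo)
        (fun q _ => sq_nonneg _)
  have hL2nnA : 0 ≤ L2 (Ioo 0 h ×ˢ Ioo 0 p) (pdx w) := Real.sqrt_nonneg _
  have hL2nnψ : 0 ≤ L2 (Ioo 0 h ×ˢ Ioo 0 p) w := Real.sqrt_nonneg _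
  have hL2A' : L2 (Ioo 0 h ×ˢ Ioo 0 p) (pdx w) = Real.sqrt IA := by
    rw [← hL2A, Real.sqrt_sq hL2nnA]
  have hL2ψ' : L2 (Ioo 0 h ×ˢ Ioo 0 p) w = Real.sqrt Iψ := by
    rw [← hL2ψ, Real.sqrt_sq hL2nnψ]
  have hIAnn : 0 ≤ IA := intervalIntegral.integral_nonneg hh.le (fun x _ => hAnn x)
  have hIψnn : 0 ≤ Iψ := intervalIntegral.integral_nonneg hh.le (fun x _ => hψnn x)
  -- IB = IA + cst * h
  have hIB : IB = IA + cst * h := by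
    have e1 : IB - IA = ∫ x in (0:ℝ)..h, (Bf x - Af x) := by
      rw [intervalIntegral.integral_sub (hBc.intervalIntegrable 0 h) (hAc.intervalIntegrable 0 h)]
    have e2 : (∫ x in (0:ℝ)..h, (Bf x - Af x)) = ∫ x in (0:ℝ)..h, cst := by
      rw [intervalIntegral.integral_of_le hh.le, intervalIntegral.integral_of_le hh.le]
      rw [MeasureTheory.integral_Ioc_eq_integral_Ioo, MeasureTheory.integral_Ioc_eq_integral_Ioo]
      apply MeasureTheory.setIntegral_congr_fun measurableSet_Ioo
      intro x hx
      exact hconst x hx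
    have e3 : (∫ x in (0:ℝ)..h, cst) = cst * h := by
      rw [intervalIntegral.integral_const, smul_eq_mul, sub_zero, mul_comm]
    linarith [e1, e2, e3]
  clear_value cst IA IB Iψ
  rw [hL2B, hL2A, hL2A', hL2ψ']
  -- case split
  rcases le_or_gt cst 0 with hcneg | hcpos
  · have : IB ≤ IA := by nlinarith
    have hrt : 0 ≤ 2 * Real.sqrt 3 / h * Real.sqrt IA * Real.sqrt Iψ := by positivity
    linarith
  · -- positive case: the constant cst is positive
    have hψpos : ∀ x ∈ Icc (0:ℝ) h, 0 < ψ x := by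
      intro x hx
      rcases lt_or_eq_of_le (hψnn x) with hpos | heq0
      · exact hpos
      exfalso
      have hψx0 : ψ x = 0 := heq0.symm
      have hcont : Continuous (fun t => (w (x,t))^2) := (hsliceC hwc x).pow 2
      have hwz : ∀ y ∈ Ioo (0:ℝ) p, w (x,y) = 0 := by
        intro y hy
        by_contra hne
        have hU : IsOpen {t : ℝ | 0 < (w (x,t))^2} := isOpen_lt continuous_const hcont
        have hyU : y ∈ {t : ℝ | 0 < (w (x,t))^2} :=
          lt_of_le_of_ne (sq_nonneg _) (Ne.symm (pow_ne_zero 2 hne))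
        obtain ⟨ε, hε, hball⟩ := Metric.isOpen_iff.mp hU y hyU
        set y1 := max (y - ε/2) (y/2) with hy1def
        set y2 := min (y + ε/2) ((y+p)/2) with hy2def
        have hy1y : y1 < y := max_lt (by linarith) (by linarith [hy.1])
        have hyy2 : y < y2 := lt_min (by linarith) (by linarith [hy.2])
        have h0y1 : 0 ≤ y1 := le_trans (by linarith [hy.1]) (le_max_right _ _)
        have hy2p : y2 ≤ p := le_trans (min_le_right _ _) (by linarith [hy.2])
        have hsub : ∀ t ∈ Ioo y1 y2, 0 < (w (x,t))^2 := by
          intro t ht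
          apply hball
          rw [Metric.mem_ball, Real.dist_eq, abs_lt]
          constructor
          · have := lt_of_le_of_lt (le_max_left (y - ε/2) (y/2)) ht.1
            linarith
          · have := lt_of_lt_of_le ht.2 (min_le_left (y + ε/2) ((y+p)/2))
            linarith
        have hpos2 : 0 < ∫ t in y1..y2, (w (x,t))^2 :=
          intervalIntegral.intervalIntegral_pos_of_pos_on
            (hcont.intervalIntegrable y1 y2) hsub (lt_trans hy1y hyy2)
        have hmono : (∫ t in y1..y2, (w (x,t))^2) ≤ ∫ t in (0:ℝ)..p, (w (x,t))^2 :=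
          intervalIntegral.integral_mono_interval h0y1 (le_of_lt (lt_trans hy1y hyy2)) hy2p
            (MeasureTheory.ae_of_all _ (fun t => sq_nonneg _))
            (hcont.intervalIntegrable 0 p)
        have : ψ x = ∫ t in (0:ℝ)..p, (w (x,t))^2 := rfl
        linarith [hψx0 ▸ (lt_of_lt_of_le hpos2 hmono)]
      have hpdyz : ∀ y ∈ Ioo (0:ℝ) p, pdy w (x,y) = 0 := by
        intro y hy
        have hev : (fun t => w (x,t)) =ᶠ[nhds y] (fun _ => (0:ℝ)) := by
          filter_upwards [Ioo_mem_nhds hy.1 hy.2] with t ht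
          exact hwz t ht
        show deriv (fun t => w (x,t)) y = 0
        rw [hev.deriv_eq]
        exact deriv_const y 0
      have hBfx : Bf x = 0 := by
        have e1 : Bf x = ∫ y in Ioo (0:ℝ) p, (pdy w (x,y))^2 := by
          show (∫ y in (0:ℝ)..p, (pdy w (x,y))^2) = _
          rw [intervalIntegral.integral_of_le hp.le, MeasureTheory.integral_Ioc_eq_integral_Ioo]
        rw [e1]
        rw [MeasureTheory.setIntegral_congr_fun measurableSet_Ioo
          (g := fun _ => (0:ℝ)) (fun y hy => by rw [hpdyz y hy]; ring)]
        simp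
      have h1 := hconstIcc x hx
      have h2 := hAnn x
      rw [hBfx] at h1
      linarith
    -- set up the comparison functions
    set u : ℝ → ℝ := fun x => Real.sqrt (ψ x) with hudef
    set v : ℝ → ℝ := fun x => G x / u x with hvdef
    set Wf : ℝ → ℝ := fun x => ((2*Af x + cst) * u x - G x * v x)/(u x)^2 with hWdef
    have hupos : ∀ x ∈ Icc (0:ℝ) h, 0 < u x := fun x hx => Real.sqrt_pos.2 (hψpos x hx)
    have husq : ∀ x ∈ Icc (0:ℝ) h, (u x)^2 = ψ x := fun x hx => Real.sq_sqrt (hψnn x)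
    have hu : ∀ x ∈ Icc (0:ℝ) h, HasDerivAt u (v x) x := by
      intro x hx
      have hne : ψ x ≠ 0 := (hψpos x hx).ne'
      have hs := (hψ' x).sqrt hne
      have : 2 * G x / (2 * Real.sqrt (ψ x)) = G x / Real.sqrt (ψ x) := by
        rw [mul_div_mul_left _ _ (two_ne_zero)]
      rwa [this] at hs
    have hGd2 : ∀ x ∈ Ioo (0:ℝ) h, HasDerivAt G (2*Af x + cst) x := by
      intro x hx
      have h1 := hG' x
      have h2 : Af x + (∫ y in (0:ℝ)..p, w (x,y) * pdx (pdx w) (x,y)) = 2*Af x + cst := by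
        rw [← hBeq x hx]
        have := hconst x hx
        linarith
      rwa [h2] at h1
    have hv : ∀ x ∈ Ioo (0:ℝ) h, HasDerivAt v (Wf x) x := by
      intro x hx
      have hxI := Ioo_subset_Icc_self hx
      exact (hGd2 x hx).div (hu x hxI) (hupos x hxI).ne'
    have hvcon : ContinuousOn v (Icc 0 h) := by
      apply ContinuousOn.div hGc.continuousOn (Real.continuous_sqrt.comp hψc).continuousOn
      exact fun x hx => (hupos x hx).ne'
    have hvsq : ∀ x ∈ Icc (0:ℝ) h, v x ^ 2 = (G x)^2 / ψ x := by
      intro x hx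
      rw [hvdef]
      show (G x / u x)^2 = (G x)^2/ψ x
      rw [div_pow, husq x hx]
    have hcon : ∀ x ∈ Ioo (0:ℝ) h, v x ^ 2 + cst ≤ u x * Wf x := by
      intro x hx
      have hxI := Ioo_subset_Icc_self hx
      have hup := hupos x hxI
      have hsq := husq x hxI
      have hψp := hψpos x hxI
      have hcs := hCS x
      have e1 : u x * Wf x = (2*Af x + cst) - (G x)^2/ψ x := by
        show u x * (((2*Af x + cst) * u x - G x * (G x / u x))/(u x)^2) = _
        rw [← hsq]
        field_simp
      have e2 := hvsq x hxI
      rw [e1, e2]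
      have h3 : (G x)^2/ψ x ≤ Af x := by
        rw [div_le_iff₀ hψp]
        nlinarith [hcs]
      linarith
    have key := two_side hh hcpos hu hv hvcon hupos hcon
    have hIu : (∫ x in (0:ℝ)..h, u x^2) = Iψ := by
      rw [hIψdef]
      apply intervalIntegral.integral_congr
      intro x hx
      rw [uIcc_of_le hh.le] at hx
      exact husq x hx
    have hIvint : IntervalIntegrable (fun x => v x^2) volume 0 h := by
      apply ContinuousOn.intervalIntegrable
      rw [uIcc_of_le hh.le]
      exact hvcon.pow 2
    have hIv : (∫ x in (0:ℝ)..h, v x ^2) ≤ IA := by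
      rw [hIAdef]
      apply intervalIntegral.integral_mono_on hh.le hIvint (hAc.intervalIntegrable 0 h)
      intro x hx
      rw [hvsq x hx, div_le_iff₀ (hψpos x hx)]
      nlinarith [hCS x]
    have hIvnn : 0 ≤ ∫ x in (0:ℝ)..h, v x^2 :=
      intervalIntegral.integral_nonneg hh.le (fun x _ => sq_nonneg _)
    have hfinal : cst^2 * h^4/12 ≤ IA * Iψ := by
      calc cst^2*h^4/12 ≤ (∫ x in (0:ℝ)..h, v x^2) * (∫ x in (0:ℝ)..h, u x^2) := key
      _ = (∫ x in (0:ℝ)..h, v x^2) * Iψ := by rw [hIu]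
      _ ≤ IA * Iψ := mul_le_mul_of_nonneg_right hIv hIψnn
    have hsq3 : Real.sqrt 3 ^ 2 = 3 := Real.sq_sqrt (by norm_num)
    have hrhs : 0 ≤ 2*Real.sqrt 3*(Real.sqrt IA*Real.sqrt Iψ) := by positivity
    have hsqeq : (2*Real.sqrt 3*(Real.sqrt IA*Real.sqrt Iψ))^2 = 12*(IA*Iψ) := by
      rw [mul_pow, mul_pow, mul_pow, hsq3, Real.sq_sqrt hIAnn, Real.sq_sqrt hIψnn]
      ring
    have hchh : cst * h^2 ≤ 2 * Real.sqrt 3 * (Real.sqrt IA * Real.sqrt Iψ) := by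
      have hlhs : 0 ≤ cst * h^2 := by positivity
      calc cst * h^2 = Real.sqrt ((cst*h^2)^2) := (Real.sqrt_sq hlhs).symm
      _ ≤ Real.sqrt (12*(IA*Iψ)) := Real.sqrt_le_sqrt (by nlinarith [hfinal])
      _ = Real.sqrt ((2*Real.sqrt 3*(Real.sqrt IA*Real.sqrt Iψ))^2) := by rw [hsqeq]
      _ = 2*Real.sqrt 3*(Real.sqrt IA*Real.sqrt Iψ) := Real.sqrt_sq hrhs
    have hstep : cst * h ≤ 2 * Real.sqrt 3 / h * Real.sqrt IA * Real.sqrt Iψ := by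
      have e4 : 2 * Real.sqrt 3 / h * Real.sqrt IA * Real.sqrt Iψ
          = (2*Real.sqrt 3*(Real.sqrt IA*Real.sqrt Iψ))/h := by ring
      rw [e4, le_div_iff₀ hh]
      nlinarith [hchh]
    linarith [hIB, hstep]
end
end

section
/- Let $D_1 \subset D_2 \subset \mathbb{R}^3$ be open bounded connected Lipschitz domains, and let $K_1, K_2$ be Korn constants such that for every $\mathbf{U}\in H^1(D_2,\mathbb{R}^3)$ there exist skew-symmetric matrices $\mathbf{A}_1,\mathbf{A}_2\in\mathbb{R}^{3\times 3}$ with $\|\nabla\mathbf{U}-\mathbf{A}_i\|_{L^2(D_i)}\le K_i\|e(\mathbf{U})\|_{L^2(D_i)}$ for $i=1,2$. Then there exists a constant $C>0$ depending only on $K_1$, $K_2$ and $|D_2|/|D_1|$, such that for every $\mathbf{U}\in H^1(D_2,\mathbb{R}^3)$: $\|\nabla\mathbf{U}\|_{L^2(D_2)} \leq C(\|\nabla\mathbf{U}\|_{L^2(D_1)} + \|e(\mathbf{U})\|_{L^2(D_2)})$. -/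
open MeasureTheory Set ENNReal

noncomputable section

/-- The gradient matrix of a vector field on ℝ³. -/
def grad3 (U : EuclideanSpace ℝ (Fin 3) → EuclideanSpace ℝ (Fin 3))
    (p : EuclideanSpace ℝ (Fin 3)) : Matrix (Fin 3) (Fin 3) ℝ :=
  Matrix.of fun i j => fderiv ℝ (fun x => U x i) p (EuclideanSpace.single j 1)

/-- Symmetric part of a 3×3 matrix. -/
def sym3 (A : Matrix (Fin 3) (Fin 3) ℝ) : Matrix (Fin 3) (Fin 3) ℝ :=
  Matrix.of fun i j => (A i j + A j i) / 2

/-- L² (Frobenius) norm of a matrix field over a set. -/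
def L2M (D : Set (EuclideanSpace ℝ (Fin 3)))
    (G : EuclideanSpace ℝ (Fin 3) → Matrix (Fin 3) (Fin 3) ℝ) : ℝ :=
  Real.sqrt (∫ p in D, ∑ i, ∑ j, (G p i j) ^ 2)

abbrev X3 := EuclideanSpace ℝ (Fin 3)

def mF (G : X3 → Matrix (Fin 3) (Fin 3) ℝ) (p : X3) : EuclideanSpace ℝ (Fin 3 × Fin 3) :=
  (EuclideanSpace.equiv (Fin 3 × Fin 3) ℝ).symm fun ij => G p ij.1 ij.2

lemma norm_mF_sq (G : X3 → Matrix (Fin 3) (Fin 3) ℝ) (p : X3) :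
    ‖mF G p‖ ^ 2 = ∑ i, ∑ j, (G p i j) ^ 2 := by
  rw [EuclideanSpace.norm_eq, Real.sq_sqrt (by positivity), Fintype.sum_prod_type]
  simp [mF, sq_abs]

lemma continuous_mF {G : X3 → Matrix (Fin 3) (Fin 3) ℝ}
    (h : ∀ i j, Continuous fun p => G p i j) : Continuous (mF G) := by
  unfold mF
  refine Continuous.comp ?_ ?_
  · exact (EuclideanSpace.equiv (Fin 3 × Fin 3) ℝ).symm.continuous
  · exact continuous_pi fun ij => h ij.1 ij.2

lemma grad3_entry (U : X3 → X3) (hU : ContDiff ℝ 1 U) (i j : Fin 3) (p : X3) :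
    grad3 U p i j = (fderiv ℝ U p (EuclideanSpace.single j 1)) i := by
  have hd : DifferentiableAt ℝ U p := (hU.differentiable one_ne_zero) p
  have h1 : (fun x => U x i) = fun x => (EuclideanSpace.proj (𝕜 := ℝ) i) (U x) := rfl
  have h2 := fderiv_comp (𝕜 := ℝ) p (EuclideanSpace.proj (𝕜 := ℝ) i).differentiableAt hd
  simp only [grad3, Matrix.of_apply, h1]
  rw [show (fun x => (EuclideanSpace.proj (𝕜 := ℝ) i) (U x)) =
    (EuclideanSpace.proj (𝕜 := ℝ) i) ∘ U from rfl, h2,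
    ContinuousLinearMap.fderiv]
  rfl

lemma continuous_grad3_entry (U : X3 → X3) (hU : ContDiff ℝ 1 U) (i j : Fin 3) :
    Continuous fun p => grad3 U p i j := by
  simp only [grad3_entry U hU i j]
  have h1 : Continuous fun p => fderiv ℝ U p := hU.continuous_fderiv one_ne_zero
  exact ((EuclideanSpace.proj (𝕜 := ℝ) i).continuous).comp
    (h1.clm_apply continuous_const)

lemma memLp_of_cont {E : Type*} [NormedAddCommGroup E] {f : X3 → E} (hf : Continuous f)
    {D : Set X3} (hD : MeasurableSet D) (hb : Bornology.IsBounded D) :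
    MemLp f 2 (volume.restrict D) := by
  haveI : IsFiniteMeasure (volume.restrict D) :=
    ⟨by simpa [Measure.restrict_apply_univ] using hb.measure_lt_top⟩
  obtain ⟨C, hC⟩ := hb.isCompact_closure.exists_bound_of_continuousOn hf.continuousOn
  exact MemLp.of_bound hf.aestronglyMeasurable.restrict C
    ((ae_restrict_mem hD).mono fun x hx => hC x (subset_closure hx))

lemma L2M_eq (D : Set X3) (G : X3 → Matrix (Fin 3) (Fin 3) ℝ)
    (h : MemLp (mF G) 2 (volume.restrict D)) :
    L2M D G = (eLpNorm (mF G) 2 (volume.restrict D)).toReal := by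
  rw [h.eLpNorm_eq_integral_rpow_norm two_ne_zero ENNReal.ofNat_ne_top,
    ENNReal.toReal_ofReal (by positivity)]
  have h2 : ((2 : ℝ≥0∞)).toReal = (2 : ℝ) := by simp
  rw [L2M, Real.sqrt_eq_rpow]
  congr 1
  · refine integral_congr_ae (Filter.Eventually.of_forall fun p => ?_)
    show ∑ i, ∑ j, (G p i j) ^ 2 = ‖mF G p‖ ^ ((2:ENNReal)).toReal
    rw [h2, ← norm_mF_sq G p, ← Real.rpow_natCast ‖mF G p‖ 2]
    norm_num
  · rw [h2]; norm_num

lemma L2M_nonneg (D : Set X3) (G : X3 → Matrix (Fin 3) (Fin 3) ℝ) : 0 ≤ L2M D G :=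
  Real.sqrt_nonneg _

lemma L2M_triangle (D : Set X3) (G H : X3 → Matrix (Fin 3) (Fin 3) ℝ)
    (hG : MemLp (mF G) 2 (volume.restrict D)) (hH : MemLp (mF H) 2 (volume.restrict D)) :
    L2M D (fun p => G p + H p) ≤ L2M D G + L2M D H := by
  have hmGH : mF (fun p => G p + H p) = mF G + mF H := by
    funext p; rfl
  have hGH : MemLp (mF (fun p => G p + H p)) 2 (volume.restrict D) := by
    rw [hmGH]; exact hG.add hH
  rw [L2M_eq _ _ hG, L2M_eq _ _ hH, L2M_eq _ _ hGH,
    ← ENNReal.toReal_add hG.eLpNorm_ne_top hH.eLpNorm_ne_top]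
  refine ENNReal.toReal_mono (by simp [hG.eLpNorm_ne_top, hH.eLpNorm_ne_top]) ?_
  rw [hmGH]
  exact eLpNorm_add_le hG.aestronglyMeasurable hH.aestronglyMeasurable one_le_two

lemma L2M_mono_set {D1 D2 : Set X3} (h12 : D1 ⊆ D2) (G : X3 → Matrix (Fin 3) (Fin 3) ℝ)
    (hint : IntegrableOn (fun p => ∑ i, ∑ j, (G p i j) ^ 2) D2) :
    L2M D1 G ≤ L2M D2 G := by
  refine Real.sqrt_le_sqrt ?_
  exact setIntegral_mono_set hint
    (Filter.Eventually.of_forall fun p => by positivity) h12.eventuallyLE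

lemma L2M_const (D : Set X3) (A : Matrix (Fin 3) (Fin 3) ℝ) :
    L2M D (fun _ => A) = Real.sqrt ((volume D).toReal * ∑ i, ∑ j, (A i j) ^ 2) := by
  rw [L2M, setIntegral_const, smul_eq_mul]
  rfl

lemma L2M_neg (D : Set X3) (G : X3 → Matrix (Fin 3) (Fin 3) ℝ) (A : Matrix (Fin 3) (Fin 3) ℝ) :
    L2M D (fun p => A - G p) = L2M D (fun p => G p - A) := by
  unfold L2M
  have h : ∀ p, ∑ i, ∑ j, ((A - G p) i j) ^ 2 = ∑ i, ∑ j, ((G p - A) i j) ^ 2 := by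
    intro p
    refine Finset.sum_congr rfl fun i _ => Finset.sum_congr rfl fun j _ => ?_
    simp only [Matrix.sub_apply]; ring
  simp_rw [h]

lemma integrableOn_of_cont {f : X3 → ℝ} (hf : Continuous f) {D : Set X3}
    (hb : Bornology.IsBounded D) : IntegrableOn f D :=
  (hf.continuousOn.integrableOn_compact hb.isCompact_closure).mono_set subset_closure


/-- Lemma 3.4: localization lemma. Given nested domains with Korn constants
`K₁, K₂` and volume ratio at most `ρ`, the gradient on the large domain is
controlled by the gradient on the small domain plus the strain on the large one. -/
theorem stmt3 (K1 K2 ρ : ℝ) (hK1 : 0 < K1) (hK2 : 0 < K2) (hρ : 0 < ρ) :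
    ∃ C > 0, ∀ D1 D2 : Set (EuclideanSpace ℝ (Fin 3)),
      IsOpen D1 → IsOpen D2 → D1 ⊆ D2 →
      Bornology.IsBounded D2 → IsConnected D1 → IsConnected D2 →
      0 < volume D1 →
      (volume D2).toReal ≤ ρ * (volume D1).toReal →
      (∀ U : EuclideanSpace ℝ (Fin 3) → EuclideanSpace ℝ (Fin 3), ContDiff ℝ 1 U →
        ∃ A1 : Matrix (Fin 3) (Fin 3) ℝ, A1.transpose = -A1 ∧
          L2M D1 (fun p => grad3 U p - A1) ≤ K1 * L2M D1 (fun p => sym3 (grad3 U p))) →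
      (∀ U : EuclideanSpace ℝ (Fin 3) → EuclideanSpace ℝ (Fin 3), ContDiff ℝ 1 U →
        ∃ A2 : Matrix (Fin 3) (Fin 3) ℝ, A2.transpose = -A2 ∧
          L2M D2 (fun p => grad3 U p - A2) ≤ K2 * L2M D2 (fun p => sym3 (grad3 U p))) →
      ∀ U : EuclideanSpace ℝ (Fin 3) → EuclideanSpace ℝ (Fin 3), ContDiff ℝ 1 U →
        L2M D2 (grad3 U) ≤
          C * (L2M D1 (grad3 U) + L2M D2 (fun p => sym3 (grad3 U p))) := by
  refine ⟨(1 + Real.sqrt ρ) * K2 + Real.sqrt ρ + 1, by positivity, ?_⟩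
  intro D1 D2 hD1 hD2 h12 hb2 _ _ hv1 hvρ _ korn2 U hU
  obtain ⟨A2, _, hA2⟩ := korn2 U hU
  have hb1 : Bornology.IsBounded D1 := hb2.subset h12
  have hGc : ∀ i j, Continuous fun p => grad3 U p i j := continuous_grad3_entry U hU
  have hGAc : ∀ i j, Continuous fun p => (grad3 U p - A2) i j := by
    intro i j; simp only [Matrix.sub_apply]; exact (hGc i j).sub continuous_const
  have hmG2 : MemLp (mF (grad3 U)) 2 (volume.restrict D2) :=
    memLp_of_cont (continuous_mF hGc) hD2.measurableSet hb2
  have hmGA2 : MemLp (mF fun p => grad3 U p - A2) 2 (volume.restrict D2) :=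
    memLp_of_cont (continuous_mF hGAc) hD2.measurableSet hb2
  haveI : IsFiniteMeasure (volume.restrict D2) :=
    ⟨by simpa [Measure.restrict_apply_univ] using hb2.measure_lt_top⟩
  have hmA2 : MemLp (mF fun _ => A2) 2 (volume.restrict D2) :=
    memLp_const ((EuclideanSpace.equiv (Fin 3 × Fin 3) ℝ).symm fun ij => A2 ij.1 ij.2)
  haveI : IsFiniteMeasure (volume.restrict D1) :=
    ⟨by simpa [Measure.restrict_apply_univ] using hb1.measure_lt_top⟩
  have hmA1 : MemLp (mF fun _ => A2) 2 (volume.restrict D1) :=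
    memLp_const ((EuclideanSpace.equiv (Fin 3 × Fin 3) ℝ).symm fun ij => A2 ij.1 ij.2)
  have hmG1 : MemLp (mF (grad3 U)) 2 (volume.restrict D1) :=
    memLp_of_cont (continuous_mF hGc) hD1.measurableSet hb1
  have hmAG1 : MemLp (mF fun p => A2 - grad3 U p) 2 (volume.restrict D1) := by
    refine memLp_of_cont (continuous_mF ?_) hD1.measurableSet hb1
    intro i j; simp only [Matrix.sub_apply]; exact continuous_const.sub (hGc i j)
  -- Step 1
  have e1 : (fun p => (grad3 U p - A2) + A2) = grad3 U := by
    funext p; simp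
  have step1 : L2M D2 (grad3 U) ≤
      L2M D2 (fun p => grad3 U p - A2) + L2M D2 (fun _ => A2) := by
    have h := L2M_triangle D2 (fun p => grad3 U p - A2) (fun _ => A2) hmGA2 hmA2
    rwa [e1] at h
  -- Step 2
  have step2 : L2M D2 (fun _ => A2) ≤ Real.sqrt ρ * L2M D1 (fun _ => A2) := by
    rw [L2M_const, L2M_const]
    have hs : (0:ℝ) ≤ ∑ i, ∑ j, (A2 i j) ^ 2 := by positivity
    calc Real.sqrt ((volume D2).toReal * ∑ i, ∑ j, (A2 i j) ^ 2)
        ≤ Real.sqrt (ρ * ((volume D1).toReal * ∑ i, ∑ j, (A2 i j) ^ 2)) := by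
          refine Real.sqrt_le_sqrt ?_
          rw [← mul_assoc]
          exact mul_le_mul_of_nonneg_right hvρ hs
      _ = Real.sqrt ρ * Real.sqrt ((volume D1).toReal * ∑ i, ∑ j, (A2 i j) ^ 2) :=
          Real.sqrt_mul hρ.le _
  -- Step 3
  have e3 : (fun p => (A2 - grad3 U p) + grad3 U p) = fun _ => A2 := by
    funext p; simp
  have step3 : L2M D1 (fun _ => A2) ≤
      L2M D1 (fun p => grad3 U p - A2) + L2M D1 (grad3 U) := by
    have h := L2M_triangle D1 (fun p => A2 - grad3 U p) (grad3 U) hmAG1 hmG1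
    rw [e3, L2M_neg] at h
    exact h
  -- Step 4
  have step4 : L2M D1 (fun p => grad3 U p - A2) ≤ L2M D2 (fun p => grad3 U p - A2) := by
    refine L2M_mono_set h12 _ (integrableOn_of_cont ?_ hb2)
    exact continuous_finset_sum _ fun i _ => continuous_finset_sum _ fun j _ => ((hGAc i j).pow 2)
  have ha1 := L2M_nonneg D1 (grad3 U)
  have hs2 := L2M_nonneg D2 (fun p => sym3 (grad3 U p))
  have hsr := Real.sqrt_nonneg ρ
  nlinarith [mul_le_mul_of_nonneg_left (step3.trans (by linarith [step4, hA2] :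
    L2M D1 (fun p => grad3 U p - A2) + L2M D1 (grad3 U) ≤
      K2 * L2M D2 (fun p => sym3 (grad3 U p)) + L2M D1 (grad3 U))) hsr,
    mul_nonneg hsr ha1, mul_nonneg hsr hs2, mul_nonneg (mul_nonneg hsr hK2.le) hs2]
end
end

section
/- Let $\epsilon \in [h, \sqrt{h}]$ and suppose a vector field $\mathbf{u}$ on a domain satisfies the Poincaré bound $\|\mathbf{u}\| \le C_0\epsilon(\|\mathbf{B}\| + \|\mathbf{u}\|)$ and the interpolation bound $\|\mathbf{B}\|^2 \le C_1(\frac{\|\mathbf{u}\|\|\mathbf{B}^{sym}\|}{h} + \|\mathbf{u}\|^2 + \|\mathbf{B}^{sym}\|^2)$, where $\|\cdot\|$ denotes fixed nonnegative quantities (norms) with $\|\mathbf{B}^{sym}\| \le \|\mathbf{B}\|$. Then there exist $h_0, C > 0$ depending only on $C_0, C_1$ such that for all $h \in (0, h_0)$: $\|\mathbf{u}\| \le 2C_0\epsilon\|\mathbf{B}\|$ and $\|\mathbf{B}\| \le \frac{C\epsilon}{h}\|\mathbf{B}^{sym}\|$. -/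
set_option maxHeartbeats 1000000 in
/-- Abstract form of the argument of Section 3.2 (Theorem 2.1, regime `ε ∈ [h,√h]`):
from the Poincaré bound `‖u‖ ≤ C₀ε(‖B‖ + ‖u‖)` and the interpolation bound
`‖B‖² ≤ C₁(‖u‖‖Bˢ‖/h + ‖u‖² + ‖Bˢ‖²)` one gets `‖u‖ ≤ 2C₀ε‖B‖` and
`‖B‖ ≤ Cε/h ‖Bˢ‖` for `h` small, with constants depending only on `C₀, C₁`. -/
theorem stmt13 (C0 C1 : ℝ) (hC0 : 0 < C0) (hC1 : 0 < C1) :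
    ∃ h0 > 0, ∃ C > 0, ∀ h ε u B Bs : ℝ,
      0 < h → h < h0 → h ≤ ε → ε ≤ Real.sqrt h →
      0 ≤ u → 0 ≤ Bs → Bs ≤ B →
      u ≤ C0 * ε * (B + u) →
      B ^ 2 ≤ C1 * (u * Bs / h + u ^ 2 + Bs ^ 2) →
      u ≤ 2 * C0 * ε * B ∧ B ≤ C * ε / h * Bs := by
  refine ⟨min (1 / (4 * C0 ^ 2)) (1 / (16 * C0 ^ 2 * C1)), ?_, 4 * C1 * (2 * C0 + 1), ?_, ?_⟩
  · positivity
  · positivity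
  intro h ε u B Bs hh hhh0 hhε hεs hu hBs hBsB hpoin hinterp
  have hε : 0 < ε := lt_of_lt_of_le hh hhε
  have hB : 0 ≤ B := hBs.trans hBsB
  have hε2 : ε ^ 2 ≤ h := by
    have := Real.sq_sqrt hh.le
    nlinarith [Real.sqrt_nonneg h]
  have h1 : h * (4 * C0 ^ 2) < 1 :=
    (lt_div_iff₀ (by positivity)).mp (lt_of_lt_of_le hhh0 (min_le_left _ _))
  have h2 : h * (16 * C0 ^ 2 * C1) < 1 :=
    (lt_div_iff₀ (by positivity)).mp (lt_of_lt_of_le hhh0 (min_le_right _ _))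
  have hC02 : C0 ^ 2 * ε ^ 2 ≤ C0 ^ 2 * h := by nlinarith [sq_nonneg C0]
  -- C0 * ε ≤ 1/2
  have hC0ε : C0 * ε ≤ 1 / 2 := by nlinarith [mul_pos hC0 hε]
  have hu2 : u ≤ 2 * C0 * ε * B := by
    nlinarith [mul_pos hC0 hε]
  refine ⟨hu2, ?_⟩
  -- key: 4 * C0^2 * C1 * ε^2 ≤ 1/4
  have hkey : 4 * C0 ^ 2 * C1 * ε ^ 2 ≤ 1 / 4 := by nlinarith [hC1.le, sq_nonneg C0]
  have hk : 1 ≤ ε / h := (one_le_div hh).mpr hhε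
  rcases eq_or_lt_of_le hB with hB0 | hB0
  · have : Bs = 0 := le_antisymm (by linarith) hBs
    rw [this, ← hB0]
    simp
  · have huBsh : u * Bs / h ≤ 2 * C0 * (ε / h) * B * Bs := by
      rw [div_le_iff₀ hh]
      have h' : u * Bs ≤ 2 * C0 * ε * B * Bs := by nlinarith
      calc u * Bs ≤ 2 * C0 * ε * B * Bs := h'
        _ = 2 * C0 * (ε / h) * B * Bs * h := by field_simp
    have hBs2 : Bs ^ 2 ≤ (ε / h) * B * Bs := by
      calc Bs ^ 2 = Bs * Bs := by ring
        _ ≤ B * Bs := mul_le_mul_of_nonneg_right hBsB hBs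
        _ ≤ (ε / h) * (B * Bs) := le_mul_of_one_le_left (mul_nonneg hB hBs) hk
        _ = (ε / h) * B * Bs := by ring
    have hu2sq : u ^ 2 ≤ 4 * C0 ^ 2 * ε ^ 2 * B ^ 2 := by
      calc u ^ 2 ≤ (2 * C0 * ε * B) ^ 2 := pow_le_pow_left₀ hu hu2 2
        _ = 4 * C0 ^ 2 * ε ^ 2 * B ^ 2 := by ring
    have hmain : (3 / 4) * B ^ 2 ≤ (2 * C0 * C1 + C1) * (ε / h) * B * Bs := by
      have e1 : C1 * (u * Bs / h) ≤ C1 * (2 * C0 * (ε / h) * B * Bs) :=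
        mul_le_mul_of_nonneg_left huBsh hC1.le
      have e2 : C1 * u ^ 2 ≤ C1 * (4 * C0 ^ 2 * ε ^ 2 * B ^ 2) :=
        mul_le_mul_of_nonneg_left hu2sq hC1.le
      have e3 : C1 * Bs ^ 2 ≤ C1 * ((ε / h) * B * Bs) :=
        mul_le_mul_of_nonneg_left hBs2 hC1.le
      have e4 : C1 * (4 * C0 ^ 2 * ε ^ 2 * B ^ 2) ≤ 1 / 4 * B ^ 2 := by
        calc C1 * (4 * C0 ^ 2 * ε ^ 2 * B ^ 2) = (4 * C0 ^ 2 * C1 * ε ^ 2) * B ^ 2 := by ring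
          _ ≤ 1 / 4 * B ^ 2 := mul_le_mul_of_nonneg_right hkey (sq_nonneg B)
      have hd : C1 * (u * Bs / h + u ^ 2 + Bs ^ 2)
          = C1 * (u * Bs / h) + C1 * u ^ 2 + C1 * Bs ^ 2 := by ring
      have e5 : C1 * (2 * C0 * (ε / h) * B * Bs) + C1 * ((ε / h) * B * Bs)
          = (2 * C0 * C1 + C1) * (ε / h) * B * Bs := by ring
      linarith
    have hdiv : (3 / 4) * B ≤ (2 * C0 * C1 + C1) * (ε / h) * Bs := by
      refine le_of_mul_le_mul_right ?_ hB0
      calc (3 / 4) * B * B = (3 / 4) * B ^ 2 := by ring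
        _ ≤ (2 * C0 * C1 + C1) * (ε / h) * B * Bs := hmain
        _ = (2 * C0 * C1 + C1) * (ε / h) * Bs * B := by ring
    calc B ≤ (4 / 3) * ((2 * C0 * C1 + C1) * (ε / h) * Bs) := by linarith
      _ ≤ 4 * C1 * (2 * C0 + 1) * ε / h * Bs := by
          rw [mul_div_assoc]
          have hcoef : (8 / 3 * C0 * C1 + 4 / 3 * C1 : ℝ) ≤ 4 * C1 * (2 * C0 + 1) := by
            have := mul_pos hC0 hC1
            nlinarith
          calc (4 / 3) * ((2 * C0 * C1 + C1) * (ε / h) * Bs)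
              = (8 / 3 * C0 * C1 + 4 / 3 * C1) * ((ε / h) * Bs) := by ring
            _ ≤ (4 * C1 * (2 * C0 + 1)) * ((ε / h) * Bs) :=
                mul_le_mul_of_nonneg_right hcoef
                  (mul_nonneg (div_nonneg hε.le hh.le) hBs)
            _ = 4 * C1 * (2 * C0 + 1) * (ε / h) * Bs := by ring
end

section
/- Suppose $A_z(\theta, z)$ and $A_\theta(\theta, z)$ are positive $C^1$ functions of the form $A_z = B'(z)$, $A_\theta = a(\theta)B(z) + b(\theta)$ with $B' > 0$. Then the ratio $A_z/A_\theta$ factors as $H(\theta)/G(z)$ for some functions $H, G$ if and only if $a$ and $b$ are linearly dependent (i.e., $b = \lambda_0 a$ or $a = \lambda_0 b$ for a constant $\lambda_0$). -/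
open Set

noncomputable section

/-- Separability criterion for the zero-curvature case: with `A_z = B'(z)` and
`A_θ = a(θ)B(z) + b(θ)` (`B' > 0`, `A_θ > 0`, `a` not identically zero), the ratio
`A_z/A_θ` factors as `H(θ)/G(z)` iff `a` and `b` are linearly dependent. -/
theorem stmt16 (z1 z2 : ℝ) (hz : z1 < z2)
    (B : ℝ → ℝ) (a b : ℝ → ℝ)
    (hB : ContDiff ℝ 2 B) (hB' : ∀ z ∈ Icc z1 z2, 0 < deriv B z)
    (ha : Continuous a) (hb : Continuous b)
    (hpos : ∀ θ ∈ Icc (0:ℝ) 1, ∀ z ∈ Icc z1 z2, 0 < a θ * B z + b θ)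
    (hane : ∃ θ ∈ Icc (0:ℝ) 1, a θ ≠ 0) :
    (∃ H G : ℝ → ℝ, ∀ θ ∈ Icc (0:ℝ) 1, ∀ z ∈ Icc z1 z2,
        deriv B z / (a θ * B z + b θ) = H θ / G z) ↔
    (∃ lam0 : ℝ, (∀ θ ∈ Icc (0:ℝ) 1, b θ = lam0 * a θ) ∨
        (∀ θ ∈ Icc (0:ℝ) 1, a θ = lam0 * b θ)) := by
  have hz1 : z1 ∈ Icc z1 z2 := ⟨le_refl _, hz.le⟩
  have hz2 : z2 ∈ Icc z1 z2 := ⟨hz.le, le_refl _⟩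
  constructor
  · rintro ⟨H, G, hHG⟩
    obtain ⟨θ0, hθ0, ha0⟩ := hane
    -- B z1 < B z2
    have hBmono : StrictMonoOn B (Icc z1 z2) :=
      strictMonoOn_of_deriv_pos (convex_Icc z1 z2) hB.continuous.continuousOn
        (fun x hx => hB' x (interior_subset hx))
    have hB12 : B z1 < B z2 := hBmono hz1 hz2 hz
    have hBne : B z2 - B z1 ≠ 0 := sub_ne_zero.mpr hB12.ne'
    -- basic nonvanishing facts
    have hcross : ∀ θ ∈ Icc (0:ℝ) 1, ∀ z ∈ Icc z1 z2,
        deriv B z * G z = H θ * (a θ * B z + b θ) := by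
      intro θ hθ z hzz
      have hp := hpos θ hθ z hzz
      have hd := hB' z hzz
      have heq := hHG θ hθ z hzz
      have hpos' : 0 < H θ / G z := heq ▸ div_pos hd hp
      have hGne : G z ≠ 0 := by
        intro h; rw [h, div_zero] at hpos'; exact lt_irrefl 0 hpos'
      exact (div_eq_div_iff hp.ne' hGne).mp heq
    have hHne : ∀ θ ∈ Icc (0:ℝ) 1, H θ ≠ 0 := by
      intro θ hθ h
      have := hcross θ hθ z1 hz1
      rw [h, zero_mul] at this
      have hGz : G z1 ≠ 0 := by
        intro hg
        have heq := hHG θ hθ z1 hz1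
        rw [hg, div_zero] at heq
        exact (div_pos (hB' z1 hz1) (hpos θ hθ z1 hz1)).ne' heq
      exact (mul_ne_zero (hB' z1 hz1).ne' hGz) this
    -- comparison with θ0
    have key : ∀ θ ∈ Icc (0:ℝ) 1,
        H θ * a θ = H θ0 * a θ0 ∧ H θ * b θ = H θ0 * b θ0 := by
      intro θ hθ
      have e1 : H θ * (a θ * B z1 + b θ) = H θ0 * (a θ0 * B z1 + b θ0) := by
        rw [← hcross θ hθ z1 hz1, hcross θ0 hθ0 z1 hz1]
      have e2 : H θ * (a θ * B z2 + b θ) = H θ0 * (a θ0 * B z2 + b θ0) := by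
        rw [← hcross θ hθ z2 hz2, hcross θ0 hθ0 z2 hz2]
      have hA : H θ * a θ = H θ0 * a θ0 := by
        have h3 : (H θ * a θ) * (B z2 - B z1) = (H θ0 * a θ0) * (B z2 - B z1) := by
          linear_combination e2 - e1
        exact mul_right_cancel₀ hBne h3
      refine ⟨hA, ?_⟩
      linear_combination e1 - B z1 * hA
    refine ⟨b θ0 / a θ0, Or.inl ?_⟩
    intro θ hθ
    obtain ⟨hA, hBq⟩ := key θ hθ
    have hHθ := hHne θ hθ
    have hgoal : b θ * a θ0 = b θ0 * a θ := by
      have : H θ * (b θ * a θ0) = H θ * (b θ0 * a θ) := by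
        linear_combination a θ0 * hBq - b θ0 * hA
      exact mul_left_cancel₀ hHθ this
    field_simp
    linarith [hgoal]
  · rintro ⟨lam0, hcase | hcase⟩
    · refine ⟨fun θ => 1 / a θ, fun z => (B z + lam0) / deriv B z, ?_⟩
      intro θ hθ z hzz
      have hp := hpos θ hθ z hzz
      rw [hcase θ hθ] at hp
      have hprod : 0 < a θ * (B z + lam0) := by nlinarith
      have haθ : a θ ≠ 0 := by
        intro h; rw [h, zero_mul] at hprod; exact lt_irrefl 0 hprod
      have hsum : B z + lam0 ≠ 0 := by
        intro h; rw [h, mul_zero] at hprod; exact lt_irrefl 0 hprod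
      have hd := (hB' z hzz).ne'
      rw [hcase θ hθ]
      field_simp
    · refine ⟨fun θ => 1 / b θ, fun z => (lam0 * B z + 1) / deriv B z, ?_⟩
      intro θ hθ z hzz
      have hp := hpos θ hθ z hzz
      rw [hcase θ hθ] at hp
      have hprod : 0 < b θ * (lam0 * B z + 1) := by nlinarith
      have hbθ : b θ ≠ 0 := by
        intro h; rw [h, zero_mul] at hprod; exact lt_irrefl 0 hprod
      have hsum : lam0 * B z + 1 ≠ 0 := by
        intro h; rw [h, mul_zero] at hprod; exact lt_irrefl 0 hprod
      have hd := (hB' z hzz).ne'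
      rw [hcase θ hθ]
      field_simp
end
end
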